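/- Let T be a partial isometry (a contraction with T T* T = T) on a complex Hilbert space H, and let T₁, T₂ be contractions on H. Suppose there exist bounded operators F₁, F₂ on the defect space 𝒟_T = ker T such that T₁ − T₂*T = D_T F₁ D_T and T₂ − T₁*T = D_T F₂ D_T. Then F₁F₂ = F₂F₁ if and only if T₁T₂x = T₂T₁x for every x ∈ ker T. -/

import Mathlib

/- Common definitions: the tetrablock, tetrablock contractions, defect operators and
defect spaces, fundamental operators, tetrablock isometries and tetrablock-isometric lifts. -/

noncomputable section

open ContinuousLinearMap

universe u

/-- The tetrablock domain `𝔼 ⊆ ℂ³`: points `(x₁,x₂,x₃)` of the form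
`(a₁₁, a₂₂, det A)` for some `2×2` complex matrix `A` of operator norm `< 1`. -/
def tetrablock : Set (Fin 3 → ℂ) :=
  {x | ∃ A : Matrix (Fin 2) (Fin 2) ℂ,
    ‖Matrix.toEuclideanCLM (𝕜 := ℂ) A‖ < 1 ∧ x 0 = A 0 0 ∧ x 1 = A 1 1 ∧ x 2 = A.det}

variable {H : Type u} [NormedAddCommGroup H] [InnerProductSpace ℂ H] [CompleteSpace H]

/-- Evaluation `p(T₁,T₂,T)` of a three-variable polynomial at a (commuting) operator
triple: substitute `T₁,T₂,T` monomial-wise (order is immaterial for commuting triples). -/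
def polyEval (T₁ T₂ T : H →L[ℂ] H) (p : MvPolynomial (Fin 3) ℂ) : H →L[ℂ] H :=
  p.support.sum fun m => p.coeff m • (T₁ ^ m 0 * T₂ ^ m 1 * T ^ m 2)

/-- A tetrablock contraction: a commuting triple for which the closed tetrablock is a
spectral set. -/
def IsTetrablockContraction (T₁ T₂ T : H →L[ℂ] H) : Prop :=
  Commute T₁ T₂ ∧ Commute T₁ T ∧ Commute T₂ T ∧
  ∀ p : MvPolynomial (Fin 3) ℂ,
    ‖polyEval T₁ T₂ T p‖ ≤
      sSup {y : ℝ | ∃ x ∈ closure tetrablock, y = ‖MvPolynomial.eval x p‖}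

/-- The defect operator `D_T = (I - T*T)^{1/2}` of a contraction `T`. -/
def defect (T : H →L[ℂ] H) : H →L[ℂ] H := CFC.sqrt (1 - adjoint T * T)

/-- The defect space `𝒟_T`, the closure of the range of `D_T`. -/
def defectSpace (T : H →L[ℂ] H) : Submodule ℂ H :=
  (LinearMap.range (defect T : H →ₗ[ℂ] H)).topologicalClosure

lemma defect_mem (T : H →L[ℂ] H) (h : H) : defect T h ∈ defectSpace T :=
  Submodule.le_topologicalClosure _ ⟨h, rfl⟩

/-- The defect operator `D_T`, viewed as a map from `H` into the defect space `𝒟_T`. -/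
def defectTo (T : H →L[ℂ] H) : H →L[ℂ] defectSpace T :=
  (defect T).codRestrict _ (defect_mem T)

instance (T : H →L[ℂ] H) : CompleteSpace (defectSpace T) :=
  (Submodule.isClosed_topologicalClosure _).completeSpace_coe

/-- `F₁, F₂` are fundamental operators for `(T₁,T₂,T)`:
`T₁ - T₂* T = D_T F₁ D_T` and `T₂ - T₁* T = D_T F₂ D_T`. -/
def AreFundamentalOps (T₁ T₂ T : H →L[ℂ] H)
    (F₁ F₂ : defectSpace T →L[ℂ] defectSpace T) : Prop :=
  T₁ - adjoint T₂ * T = (defectSpace T).subtypeL ∘L F₁ ∘L defectTo T ∧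
  T₂ - adjoint T₁ * T = (defectSpace T).subtypeL ∘L F₂ ∘L defectTo T

/-- A tetrablock isometry: a commuting triple `(V₁,V₂,V)` with `V` an isometry,
`‖V₂‖ ≤ 1` and `V₁ = V₂* V`. -/
def IsTetrablockIsometry {K : Type u} [NormedAddCommGroup K] [InnerProductSpace ℂ K]
    [CompleteSpace K] (V₁ V₂ V : K →L[ℂ] K) : Prop :=
  Commute V₁ V₂ ∧ Commute V₁ V ∧ Commute V₂ V ∧
    adjoint V * V = 1 ∧ ‖V₂‖ ≤ 1 ∧ V₁ = adjoint V₂ * V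

/-- `(T₁,T₂,T)` has a tetrablock-isometric lift: a tetrablock isometry `(V₁,V₂,V)` on a
space `K ⊇ H` whose adjoints extend the adjoints of `T₁,T₂,T`. -/
def HasTetrablockIsometricLift (T₁ T₂ T : H →L[ℂ] H) : Prop :=
  ∃ (K : Type u) (_ : NormedAddCommGroup K) (_ : InnerProductSpace ℂ K) (_ : CompleteSpace K)
    (ι : H →ₗᵢ[ℂ] K) (V₁ V₂ V : K →L[ℂ] K),
      IsTetrablockIsometry V₁ V₂ V ∧
      (∀ h : H, adjoint V₁ (ι h) = ι (adjoint T₁ h)) ∧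
      (∀ h : H, adjoint V₂ (ι h) = ι (adjoint T₂ h)) ∧
      (∀ h : H, adjoint V (ι h) = ι (adjoint T h))


/-! For a partial isometry `T`, `T*T` is a projection, so `D_T = I - T*T` is the projection onto
`ker T` and `𝒟_T = ker T`. On `ker T` the defining identity `T₁ - T₂*T = D_T F₁ D_T` reduces to
`T₁ x = F₁ x`, so `F₁` and `F₂` are the restrictions of `T₁` and `T₂` to `ker T`, and restrictions
commute exactly when the operators commute on the subspace. -/

lemma IsStarProjection.sqrt_eq {A : Type*} [CStarAlgebra A] [PartialOrder A] [StarOrderedRing A]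
    {p : A} (hp : IsStarProjection p) : CFC.sqrt p = p :=
  CFC.sqrt_unique hp.isIdempotentElem.eq hp.nonneg

lemma isStarProjection_star_mul_self_of_mul_star_mul_self {R : Type*} [Semiring R] [StarRing R]
    {a : R} (ha : a * star a * a = a) : IsStarProjection (star a * a) where
  isIdempotentElem := by rw [IsIdempotentElem, mul_assoc, ← mul_assoc a, ha]
  isSelfAdjoint := .star_mul_self a

section PartialIsometry

variable {T : H →L[ℂ] H} (hpi : T * adjoint T * T = T)
include hpi

lemma defect_eq_one_sub_of_partialIsometry : defect T = 1 - adjoint T * T := by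
  rw [← star_eq_adjoint] at hpi ⊢
  exact (isStarProjection_star_mul_self_of_mul_star_mul_self hpi).one_sub.sqrt_eq

lemma defect_apply_of_apply_eq_zero {x : H} (hx : T x = 0) : defect T x = x := by
  simp [defect_eq_one_sub_of_partialIsometry hpi, hx]

lemma defectSpace_eq_ker : defectSpace T = LinearMap.ker (T : H →ₗ[ℂ] H) := by
  refine le_antisymm ?_ fun x hx => defect_apply_of_apply_eq_zero hpi hx ▸ defect_mem T x
  refine Submodule.topologicalClosure_minimal _ ?_ T.isClosed_ker
  rintro _ ⟨y, rfl⟩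
  have hTD : T * defect T = 0 := by
    rw [defect_eq_one_sub_of_partialIsometry hpi, mul_sub, mul_one, ← mul_assoc, hpi, sub_self]
  exact congr($hTD y)

lemma fundamentalOp_apply {A S : H →L[ℂ] H} {F : defectSpace T →L[ℂ] defectSpace T}
    (hF : A - adjoint S * T = (defectSpace T).subtypeL ∘L F ∘L defectTo T)
    (x : defectSpace T) : (F x : H) = A x := by
  have hx : T x = 0 := (defectSpace_eq_ker hpi).le x.2
  have hDx : defectTo T x = x := Subtype.ext (defect_apply_of_apply_eq_zero hpi hx)
  simpa [hx, hDx] using congr($hF x).symm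

end PartialIsometry

lemma Submodule.mul_comm_iff_of_restrict {R E : Type*} [Semiring R] [AddCommMonoid E] [Module R E]
    [TopologicalSpace E] {V : Submodule R E} {A B : E →L[R] E} {F G : V →L[R] V}
    (hF : ∀ x : V, (F x : E) = A x) (hG : ∀ x : V, (G x : E) = B x) :
    F * G = G * F ↔ ∀ x ∈ V, A (B x) = B (A x) := by
  constructor
  · intro h x hx
    simpa [hF, hG] using congr((($h ⟨x, hx⟩ : V) : E))
  · intro h
    ext x
    simp [hF, hG, h x x.2]

theorem fundamentalOps_commute_iff_restriction_commute_general
    (T T₁ T₂ : H →L[ℂ] H) (hpi : T * adjoint T * T = T)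
    (F₁ F₂ : defectSpace T →L[ℂ] defectSpace T)
    (hF₁ : T₁ - adjoint T₂ * T = (defectSpace T).subtypeL ∘L F₁ ∘L defectTo T)
    (hF₂ : T₂ - adjoint T₁ * T = (defectSpace T).subtypeL ∘L F₂ ∘L defectTo T) :
    F₁ * F₂ = F₂ * F₁ ↔ ∀ x ∈ LinearMap.ker (T : H →ₗ[ℂ] H), T₁ (T₂ x) = T₂ (T₁ x) := by
  rw [Submodule.mul_comm_iff_of_restrict (fundamentalOp_apply hpi hF₁)
    (fundamentalOp_apply hpi hF₂), defectSpace_eq_ker hpi]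

/-- under the hypotheses of Statement 13, `F₁F₂ = F₂F₁` if and only if
`T₁T₂x = T₂T₁x` for every `x ∈ ker T`. -/
theorem fundamentalOps_commute_iff_restriction_commute
    (T T₁ T₂ : H →L[ℂ] H) (hT : ‖T‖ ≤ 1) (hpi : T * adjoint T * T = T)
    (h1 : ‖T₁‖ ≤ 1) (h2 : ‖T₂‖ ≤ 1)
    (F₁ F₂ : defectSpace T →L[ℂ] defectSpace T)
    (hF₁ : T₁ - adjoint T₂ * T = (defectSpace T).subtypeL ∘L F₁ ∘L defectTo T)
    (hF₂ : T₂ - adjoint T₁ * T = (defectSpace T).subtypeL ∘L F₂ ∘L defectTo T) :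
    F₁ * F₂ = F₂ * F₁ ↔ ∀ x ∈ LinearMap.ker (T : H →ₗ[ℂ] H), T₁ (T₂ x) = T₂ (T₁ x) :=
  fundamentalOps_commute_iff_restriction_commute_general T T₁ T₂ hpi F₁ F₂ hF₁ hF₂
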